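/- arXiv:1611.03454 — 4 statements merged into one kernel-verified Lean document; each statement's English description precedes it below -/
import Mathlib

section
/- Let G be a finite simple graph, let H be an induced subgraph of G such that every vertex of H has at most one neighbor in G outside of H, and no two distinct vertices of H have a common neighbor in G lying outside of H. Then the subgraph of G^{(2)} induced by the vertices of H equals H^{(2)}. -/
/-- The neighboring graph `G⁽²⁾`: two distinct vertices are adjacent iff they
have a common neighbor in `G`. -/
def SimpleGraph.neighboringGraph {V : Type*} (G : SimpleGraph V) : SimpleGraph V where
  Adj u v := u ≠ v ∧ ∃ w, G.Adj u w ∧ G.Adj v w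
  symm := by
    constructor
    intro u v h
    exact ⟨h.1.symm, h.2.imp fun w hw => ⟨hw.2, hw.1⟩⟩
  loopless := by
    constructor
    intro u h
    exact h.1 rfl

namespace SimpleGraph

variable {V : Type*} (G : SimpleGraph V) (S : Set V)

theorem neighboringGraph_induce_le_induce_neighboringGraph :
    (G.induce S).neighboringGraph ≤ G.neighboringGraph.induce S := by
  rintro u v ⟨hne, w, huw, hvw⟩
  exact ⟨Subtype.coe_injective.ne hne, w, huw, hvw⟩

variable {G S}

theorem induce_neighboringGraph_le_neighboringGraph_induce
    (hnocommon : ∀ u ∈ S, ∀ v ∈ S, u ≠ v → ¬ ∃ w, w ∉ S ∧ G.Adj u w ∧ G.Adj v w) :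
    G.neighboringGraph.induce S ≤ (G.induce S).neighboringGraph := by
  rintro ⟨u, hu⟩ ⟨v, hv⟩ ⟨hne, w, huw, hvw⟩
  have hwS : w ∈ S := by
    by_contra hwS
    exact hnocommon u hu v hv hne ⟨w, hwS, huw, hvw⟩
  exact ⟨ne_of_apply_ne Subtype.val hne, ⟨w, hwS⟩, huw, hvw⟩

end SimpleGraph

theorem induce_neighboringGraph_eq_general {V : Type*} (G : SimpleGraph V) (S : Set V)
    (hnocommon : ∀ u ∈ S, ∀ v ∈ S, u ≠ v →
      ¬ ∃ w, w ∉ S ∧ G.Adj u w ∧ G.Adj v w) :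
    G.neighboringGraph.induce S = (G.induce S).neighboringGraph :=
  le_antisymm (SimpleGraph.induce_neighboringGraph_le_neighboringGraph_induce hnocommon)
    (G.neighboringGraph_induce_le_induce_neighboringGraph S)

/-- If `H = G[S]` is an induced subgraph such that every vertex of `H` has at
most one neighbor of `G` outside `S`, and no two distinct vertices of `H` have
a common neighbor of `G` outside `S`, then the subgraph of `G⁽²⁾` induced by
`S` equals `H⁽²⁾`. -/
theorem induce_neighboringGraph_eq {V : Type*} (G : SimpleGraph V) (S : Set V)
    (hone : ∀ v ∈ S, {w | w ∉ S ∧ G.Adj v w}.Subsingleton)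
    (hnocommon : ∀ u ∈ S, ∀ v ∈ S, u ≠ v →
      ¬ ∃ w, w ∉ S ∧ G.Adj u w ∧ G.Adj v w) :
    G.neighboringGraph.induce S = (G.induce S).neighboringGraph :=
  induce_neighboringGraph_eq_general G S hnocommon
end

section
/- Let G be a finite simple graph with maximum degree at most 3 and let u, v be adjacent vertices both of degree 2 in G. Let L be a list assignment with |L(w)| ≥ 5 for all w. If G − {u,v} admits an injective L-coloring, then G admits an injective L-coloring. -/
/-!
Colour `G − {u,v}` by hypothesis and then `v` and `u`, in this order. A vertex `z ∈ {u,v}` only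
has to avoid the colours of the vertices outside `{u,v}` at walk-distance two from it: the other
vertex of `{u,v}` has one further neighbour, and the remaining neighbour of `z` has at most two
neighbours besides `z`. That is at most three colours, so `v` has a free colour in its list of
five, and `u` still has one after also avoiding the colour of `v`. No new conflict arises through
`u` or `v` themselves, since each has only one neighbour outside `{u,v}`.
-/

namespace SimpleGraph

variable {V : Type*} (G : SimpleGraph V) [G.LocallyFinite] [DecidableEq V]

def twoStepFinset (X : Finset V) (z : V) : Finset V :=
  (G.neighborFinset z).biUnion fun w => G.neighborFinset w \ X

variable {G}

theorem mem_twoStepFinset {X : Finset V} {z a : V} :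
    a ∈ G.twoStepFinset X z ↔ a ∉ X ∧ ∃ w, G.Adj z w ∧ G.Adj a w := by
  simp only [twoStepFinset, Finset.mem_biUnion, mem_neighborFinset, Finset.mem_sdiff]
  exact ⟨fun ⟨w, hzw, hwa, ha⟩ => ⟨ha, w, hzw, hwa.symm⟩,
    fun ⟨ha, w, hzw, haw⟩ => ⟨w, hzw, haw.symm, ha⟩⟩

theorem card_neighborFinset_sdiff_le {X : Finset V} {z w : V} (hz : z ∈ X) (hzw : G.Adj z w) :
    (G.neighborFinset w \ X).card ≤ G.degree w - 1 := by
  rw [← card_neighborFinset_eq_degree,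
    ← Finset.card_erase_of_mem (mem_neighborFinset G w z |>.2 hzw.symm)]
  refine Finset.card_le_card fun a ha => ?_
  rw [Finset.mem_sdiff] at ha
  exact Finset.mem_erase.2 ⟨fun h => ha.2 (h ▸ hz), ha.1⟩

theorem eq_of_adj_of_degree_le_two {X : Finset V} {w o a b : V} (hw : G.degree w ≤ 2)
    (hwo : G.Adj w o) (ho : o ∈ X) (ha : a ∉ X) (hb : b ∉ X) (haw : G.Adj a w)
    (hbw : G.Adj b w) : a = b := by
  have hcard : ((G.neighborFinset w).erase o).card ≤ 1 := by
    rw [Finset.card_erase_of_mem ((mem_neighborFinset G w o).2 hwo),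
      card_neighborFinset_eq_degree]
    omega
  refine Finset.card_le_one.1 hcard a ?_ b ?_
  · exact Finset.mem_erase.2 ⟨fun h => ha (h ▸ ho), (mem_neighborFinset G w a).2 haw.symm⟩
  · exact Finset.mem_erase.2 ⟨fun h => hb (h ▸ ho), (mem_neighborFinset G w b).2 hbw.symm⟩

theorem card_twoStepFinset_pair_left_le_three (hdeg : ∀ w, G.degree w ≤ 3) {u v : V}
    (huv : G.Adj u v) (hu : G.degree u ≤ 2) (hv : G.degree v ≤ 2) :
    (G.twoStepFinset {u, v} u).card ≤ 3 := by
  have hvN : v ∈ G.neighborFinset u := (mem_neighborFinset G u v).2 huv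
  have hrest : ∑ w ∈ (G.neighborFinset u).erase v, (G.neighborFinset w \ {u, v}).card ≤ 2 :=
    calc ∑ w ∈ (G.neighborFinset u).erase v, (G.neighborFinset w \ {u, v}).card
        ≤ ((G.neighborFinset u).erase v).card * 2 := by
          refine Finset.sum_le_card_nsmul _ _ 2 fun w hw => ?_
          have huw := (mem_neighborFinset G u w).1 (Finset.mem_of_mem_erase hw)
          have := card_neighborFinset_sdiff_le (Finset.mem_insert_self u {v}) huw
          have := hdeg w
          omega
      _ ≤ 2 := by
          rw [Finset.card_erase_of_mem hvN, card_neighborFinset_eq_degree]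
          omega
  have hfirst : (G.neighborFinset v \ {u, v}).card ≤ 1 := by
    have := card_neighborFinset_sdiff_le (Finset.mem_insert_self u {v}) huv
    omega
  calc (G.twoStepFinset {u, v} u).card
      ≤ ∑ w ∈ G.neighborFinset u, (G.neighborFinset w \ {u, v}).card := Finset.card_biUnion_le
    _ = (G.neighborFinset v \ {u, v}).card +
          ∑ w ∈ (G.neighborFinset u).erase v, (G.neighborFinset w \ {u, v}).card :=
        (Finset.add_sum_erase _ _ hvN).symm
    _ ≤ 3 := by omega

theorem card_twoStepFinset_pair_le_three (hdeg : ∀ w, G.degree w ≤ 3) {u v z : V}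
    (huv : G.Adj u v) (hu : G.degree u ≤ 2) (hv : G.degree v ≤ 2)
    (hz : z ∈ ({u, v} : Finset V)) :
    (G.twoStepFinset {u, v} z).card ≤ 3 := by
  obtain rfl | rfl : z = u ∨ z = v := by simpa using hz
  · exact card_twoStepFinset_pair_left_le_three hdeg huv hu hv
  · rw [Finset.pair_comm]
    exact card_twoStepFinset_pair_left_le_three hdeg huv.symm hv hu

theorem eq_of_adj_of_mem_pair {u v w a b : V} (huv : G.Adj u v) (hu : G.degree u ≤ 2)
    (hv : G.degree v ≤ 2) (hw : w ∈ ({u, v} : Finset V)) (ha : a ∉ ({u, v} : Finset V))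
    (hb : b ∉ ({u, v} : Finset V)) (haw : G.Adj a w) (hbw : G.Adj b w) : a = b := by
  obtain rfl | rfl : w = u ∨ w = v := by simpa using hw
  · exact eq_of_adj_of_degree_le_two hu huv
      (Finset.mem_insert_of_mem (Finset.mem_singleton_self v)) ha hb haw hbw
  · exact eq_of_adj_of_degree_le_two hv huv.symm (Finset.mem_insert_self _ _) ha hb haw hbw

theorem injective_coloring_of_recolor {α : Type*} [DecidableEq α] {X : Finset V}
    {φ ψ : V → α}
    (hX : ∀ w ∈ X, ∀ a b, a ∉ X → b ∉ X → G.Adj a w → G.Adj b w → a = b)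
    (hφ : ∀ a b, a ∉ X → b ∉ X → a ≠ b → (∃ w ∉ X, G.Adj a w ∧ G.Adj b w) →
      φ a ≠ φ b)
    (hagree : ∀ w ∉ X, ψ w = φ w) (hinjOn : Set.InjOn ψ X)
    (hfar : ∀ z ∈ X, ψ z ∉ (G.twoStepFinset X z).image φ) :
    ∀ a b, a ≠ b → (∃ w, G.Adj a w ∧ G.Adj b w) → ψ a ≠ ψ b := by
  have hmixed (a b : V) (ha : a ∈ X) (hb : b ∉ X) (hab : ∃ w, G.Adj a w ∧ G.Adj b w) :
      ψ a ≠ ψ b := by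
    intro h
    rw [hagree b hb] at h
    exact hfar a ha (h ▸ Finset.mem_image_of_mem φ (mem_twoStepFinset.2 ⟨hb, hab⟩))
  rintro a b hab ⟨w, haw, hbw⟩
  by_cases ha : a ∈ X <;> by_cases hb : b ∈ X
  · exact fun h => hab (hinjOn ha hb h)
  · exact hmixed a b ha hb ⟨w, haw, hbw⟩
  · exact (hmixed b a hb ha ⟨w, hbw, haw⟩).symm
  · have hw : w ∉ X := fun hw => hab (hX w hw a b ha hb haw hbw)
    rw [hagree a ha, hagree b hb]
    exact hφ a b ha hb hab ⟨w, hw, haw, hbw⟩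

end SimpleGraph

open SimpleGraph in
/-- Let `G` have maximum degree at most 3 and let `u, v` be adjacent vertices
both of degree 2.  If `G − {u,v}` admits an injective `L`-coloring for a list
assignment with lists of size at least 5, then `G` admits an injective
`L`-coloring. -/
theorem injective_coloring_extends_adjacent_deg_two {V : Type*} [Fintype V]
    (G : SimpleGraph V) [DecidableRel G.Adj]
    (hdeg : ∀ w, G.degree w ≤ 3)
    (u v : V) (huv : G.Adj u v) (hu : G.degree u = 2) (hv : G.degree v = 2)
    (L : V → Finset ℕ) (hL : ∀ w, 5 ≤ (L w).card)
    (hcol : ∃ φ : V → ℕ,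
      (∀ w, w ≠ u → w ≠ v → φ w ∈ L w) ∧
      (∀ a b : V, a ≠ u → a ≠ v → b ≠ u → b ≠ v → a ≠ b →
        (∃ w, w ≠ u ∧ w ≠ v ∧ G.Adj a w ∧ G.Adj b w) → φ a ≠ φ b)) :
    ∃ ψ : V → ℕ, (∀ w, ψ w ∈ L w) ∧
      ∀ a b : V, a ≠ b → (∃ w, G.Adj a w ∧ G.Adj b w) → ψ a ≠ ψ b := by
  classical
  obtain ⟨φ, hφL, hφ⟩ := hcol
  have hne : u ≠ v := G.ne_of_adj huv
  set X : Finset V := {u, v} with hX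
  have hmemX {w : V} : w ∉ X ↔ w ≠ u ∧ w ≠ v := by simp [hX]
  have hfar {z : V} (hz : z ∈ X) : ((G.twoStepFinset X z).image φ).card ≤ 3 :=
    Finset.card_image_le.trans (card_twoStepFinset_pair_le_three hdeg huv hu.le hv.le hz)
  obtain ⟨cv, hcvL, hcv⟩ := Finset.exists_mem_notMem_of_card_lt_card
    (show ((G.twoStepFinset X v).image φ).card < (L v).card by
      linarith [hL v, hfar (Finset.mem_insert_of_mem (Finset.mem_singleton_self v))])
  obtain ⟨cu, hcuL, hcu⟩ := Finset.exists_mem_notMem_of_card_lt_card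
    (show (insert cv ((G.twoStepFinset X u).image φ)).card < (L u).card by
      linarith [hL u, hfar (Finset.mem_insert_self u {v}),
        Finset.card_insert_le cv ((G.twoStepFinset X u).image φ)])
  rw [Finset.mem_insert, not_or] at hcu
  refine ⟨fun w => if w = u then cu else if w = v then cv else φ w, fun w => ?_,
    injective_coloring_of_recolor (X := X) (φ := φ)
      (fun w hw a b => eq_of_adj_of_mem_pair huv hu.le hv.le hw) ?_ ?_ ?_ ?_⟩
  · dsimp only
    split_ifs with hwu hwv
    exacts [hwu ▸ hcuL, hwv ▸ hcvL, hφL w hwu hwv]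
  · rintro a b ha hb hab ⟨w, hw, haw, hbw⟩
    rw [hmemX] at ha hb hw
    exact hφ a b ha.1 ha.2 hb.1 hb.2 hab ⟨w, hw.1, hw.2, haw, hbw⟩
  · intro w hw
    rw [hmemX] at hw
    simp only [hw.1, hw.2, if_false]
  · simpa [hX, hne, hne.symm] using hcu.1
  · intro z hz
    obtain rfl | rfl : z = u ∨ z = v := by simpa [hX] using hz
    · simpa using hcu.2
    · simpa [hne.symm] using hcv
end

section
/- Let G be a finite simple plane graph with girth at least 6 in which any two distinct vertices of degree 2 are at distance at least 4 from each other. Then every face f of G satisfies ℓ(f) ≥ 4·|I(f)| + 2·|N(f)|, where I(f) is the set of degree-2 vertices incident to f and N(f) is the set of degree-2 vertices adjacent to a vertex incident to f but not themselves incident to f. -/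
/-!
Each degree-2 vertex `u` owns the edges of the cycle `w` having an endpoint adjacent to `u`.
If `u` lies on `w`, its two cycle neighbours are non-adjacent (the girth exceeds 3) and each lies
on two cycle edges, so `u` owns at least four edges; otherwise `u` has a neighbour on `w`, which
lies on two cycle edges. An edge owned by both `u` and `v` gives a `u`–`v` walk of length at
most 3, so the owned sets are pairwise disjoint and their sizes add up to at most `ℓ(w)`.
-/

open Finset

theorem Finset.sum_card_le_card_of_pairwiseDisjoint {ι α : Type*} [DecidableEq α]
    {s : Finset ι} {t : Finset α} {f : ι → Finset α} (hft : ∀ i ∈ s, f i ⊆ t)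
    (hf : (s : Set ι).PairwiseDisjoint f) : ∑ i ∈ s, #(f i) ≤ #t :=
  card_biUnion hf ▸ card_le_card (biUnion_subset.2 hft)

namespace SimpleGraph

variable {V : Type*} {G : SimpleGraph V}

lemma not_adj_of_adj_of_adj_of_four_le_egirth (hG : 4 ≤ G.egirth) {u a b : V}
    (hua : G.Adj u a) (hub : G.Adj u b) (hab : a ≠ b) : ¬G.Adj a b := by
  intro hadj
  have hcycle : (Walk.cons hua (.cons hadj (.cons hub.symm .nil))).IsCycle := by
    simp [Walk.cons_isCycle_iff, hab, hua.ne, hub.ne, hua.ne', hub.ne']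
  have := hG.trans (egirth_le_length hcycle)
  norm_num at this

lemma dist_le_three_of_adj_of_adj {u v y z : V} (huy : G.Adj u y) (hvz : G.Adj v z)
    (hyz : y = z ∨ G.Adj y z) : G.dist u v ≤ 3 := by
  rcases hyz with rfl | hyz
  · exact (dist_le (.cons huy (.cons hvz.symm .nil))).trans (by simp)
  · exact (dist_le (.cons huy (.cons hyz (.cons hvz.symm .nil)))).trans (by simp)

namespace Walk

variable {x x' : V}

lemma IsTrail.card_toFinset_edges [DecidableEq V] {w : G.Walk x x'} (hw : w.IsTrail) :
    #w.edges.toFinset = w.length := by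
  rw [List.toFinset_card_of_nodup hw.edges_nodup, length_edges]

lemma IsCycle.exists_ne_mem_edges {y : V} {w : G.Walk x x} (hw : w.IsCycle)
    (hy : y ∈ w.support) : ∃ a b, a ≠ b ∧ s(y, a) ∈ w.edges ∧ s(y, b) ∈ w.edges := by
  obtain ⟨a, b, hab, hnbrs⟩ := Set.ncard_eq_two.mp (hw.ncard_neighborSet_toSubgraph_eq_two hy)
  have hmem : ∀ z, s(y, z) ∈ w.edges ↔ z ∈ w.toSubgraph.neighborSet y := fun z => by
    rw [← mem_edges_toSubgraph, Subgraph.mem_edgeSet, Subgraph.mem_neighborSet]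
  exact ⟨a, b, hab, (hmem a).mpr (by simp [hnbrs]), (hmem b).mpr (by simp [hnbrs])⟩

variable [DecidableEq V]

def edgesAt (w : G.Walk x x') (y : V) : Finset (Sym2 V) :=
  w.edges.toFinset.filter (y ∈ ·)

open Classical in
/-- The edges of `w` in the set `W_u` of edges incident to a neighbour of `u`. -/
noncomputable def nearEdges (w : G.Walk x x') (u : V) : Finset (Sym2 V) :=
  w.edges.toFinset.filter (fun e => ∃ y ∈ e, G.Adj u y)

lemma IsCycle.two_le_card_edgesAt {y : V} {w : G.Walk x x} (hw : w.IsCycle) (hy : y ∈ w.support) :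
    2 ≤ #(w.edgesAt y) := by
  obtain ⟨a, b, hab, ha, hb⟩ := hw.exists_ne_mem_edges hy
  have hsub : {s(y, a), s(y, b)} ⊆ w.edgesAt y := by
    simp [insert_subset_iff, edgesAt, ha, hb]
  have hne : s(y, a) ≠ s(y, b) := fun h => hab (Sym2.congr_right.mp h)
  simpa [card_pair hne] using card_le_card hsub

lemma disjoint_edgesAt {a b : V} (w : G.Walk x x') (hab : a ≠ b) (hnadj : ¬G.Adj a b) :
    Disjoint (w.edgesAt a) (w.edgesAt b) := by
  rw [Finset.disjoint_left]
  intro e hea heb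
  simp only [edgesAt, mem_filter, List.mem_toFinset] at hea heb
  apply hnadj
  rw [(Sym2.mem_and_mem_iff hab).mp ⟨hea.2, heb.2⟩] at hea
  exact w.adj_of_mem_edges hea.1

lemma edgesAt_subset_nearEdges {u y : V} (w : G.Walk x x') (huy : G.Adj u y) :
    w.edgesAt y ⊆ w.nearEdges u := by
  intro e he
  simp only [edgesAt, nearEdges, mem_filter] at he ⊢
  exact ⟨he.1, y, he.2, huy⟩

lemma nearEdges_subset (w : G.Walk x x') (u : V) : w.nearEdges u ⊆ w.edges.toFinset := by
  intro e he
  simp only [nearEdges, mem_filter] at he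
  exact he.1

lemma IsCycle.two_le_card_nearEdges {u y : V} {w : G.Walk x x} (hw : w.IsCycle)
    (hy : y ∈ w.support) (huy : G.Adj u y) : 2 ≤ #(w.nearEdges u) :=
  (hw.two_le_card_edgesAt hy).trans (card_le_card (w.edgesAt_subset_nearEdges huy))

lemma IsCycle.four_le_card_nearEdges {u : V} {w : G.Walk x x} (hw : w.IsCycle) (hG : 4 ≤ G.egirth)
    (hu : u ∈ w.support) : 4 ≤ #(w.nearEdges u) := by
  obtain ⟨a, b, hab, ha, hb⟩ := hw.exists_ne_mem_edges hu
  have hua := w.adj_of_mem_edges ha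
  have hub := w.adj_of_mem_edges hb
  have hdisj := w.disjoint_edgesAt hab (not_adj_of_adj_of_adj_of_four_le_egirth hG hua hub hab)
  calc 4 ≤ #(w.edgesAt a) + #(w.edgesAt b) :=
        add_le_add (hw.two_le_card_edgesAt (w.snd_mem_support_of_mem_edges ha))
          (hw.two_le_card_edgesAt (w.snd_mem_support_of_mem_edges hb))
    _ = #(w.edgesAt a ∪ w.edgesAt b) := (card_union_of_disjoint hdisj).symm
    _ ≤ #(w.nearEdges u) := card_le_card (union_subset (w.edgesAt_subset_nearEdges hua)
        (w.edgesAt_subset_nearEdges hub))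

lemma disjoint_nearEdges {u v : V} (w : G.Walk x x') (huv : 4 ≤ G.dist u v) :
    Disjoint (w.nearEdges u) (w.nearEdges v) := by
  rw [Finset.disjoint_left]
  intro e heu hev
  simp only [nearEdges, mem_filter, List.mem_toFinset] at heu hev
  obtain ⟨he, y, hy, huy⟩ := heu
  obtain ⟨-, z, hz, hvz⟩ := hev
  have hyz : y = z ∨ G.Adj y z := by
    refine or_iff_not_imp_left.2 fun hne => ?_
    rw [(Sym2.mem_and_mem_iff hne).mp ⟨hy, hz⟩] at he
    exact w.adj_of_mem_edges he
  have := dist_le_three_of_adj_of_adj huy hvz hyz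
  omega

end Walk

end SimpleGraph

/-- Let `G` be a finite plane graph with girth at least 6 in which any two
distinct degree-2 vertices are at distance at least 4.  Then every face `f`
— whose boundary is a cycle `w` of `G` — satisfies
`ℓ(f) ≥ 4|I(f)| + 2|N(f)|`, where `I(f)` is the set of degree-2 vertices
incident to `f` and `N(f)` is the set of degree-2 vertices nearby `f`
(adjacent to a vertex of `f` but not on `f`). -/
theorem face_length_ge_of_far_degree_two {V : Type*} [Fintype V] [DecidableEq V]
    (G : SimpleGraph V) [DecidableRel G.Adj]
    (hgirth : (6 : ℕ∞) ≤ G.egirth)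
    (hdist : ∀ u v : V, u ≠ v → G.degree u = 2 → G.degree v = 2 →
      4 ≤ G.dist u v)
    (x : V) (w : G.Walk x x) (hw : w.IsCycle) :
    4 * (univ.filter (fun u => G.degree u = 2 ∧ u ∈ w.support)).card +
      2 * (univ.filter (fun u => G.degree u = 2 ∧ u ∉ w.support ∧
        ∃ y ∈ w.support, G.Adj u y)).card
      ≤ w.length := by
  set I := univ.filter (fun u => G.degree u = 2 ∧ u ∈ w.support)
  set N := univ.filter (fun u => G.degree u = 2 ∧ u ∉ w.support ∧ ∃ y ∈ w.support, G.Adj u y)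
  have hI : ∀ u ∈ I, 4 ≤ #(w.nearEdges u) := fun u hu =>
    hw.four_le_card_nearEdges (le_trans (by norm_num) hgirth) (mem_filter.1 hu).2.2
  have hN : ∀ u ∈ N, 2 ≤ #(w.nearEdges u) := fun u hu => by
    obtain ⟨-, -, -, y, hy, huy⟩ := mem_filter.1 hu
    exact hw.two_le_card_nearEdges hy huy
  have hIN : Disjoint I N := disjoint_filter.2 fun u _ hI hN => hN.2.1 hI.2
  have hdeg : ∀ u ∈ I ∪ N, G.degree u = 2 := fun u hu => by
    rcases mem_union.1 hu with hu | hu <;> exact (mem_filter.1 hu).2.1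
  have hdisj : ((I ∪ N : Finset V) : Set V).PairwiseDisjoint w.nearEdges :=
    fun u hu v hv huv => w.disjoint_nearEdges (hdist u v huv (hdeg u hu) (hdeg v hv))
  calc 4 * #I + 2 * #N ≤ ∑ u ∈ I, #(w.nearEdges u) + ∑ u ∈ N, #(w.nearEdges u) :=
        add_le_add (mul_comm 4 #I ▸ card_nsmul_le_sum I _ 4 hI)
          (mul_comm 2 #N ▸ card_nsmul_le_sum N _ 2 hN)
    _ = ∑ u ∈ I ∪ N, #(w.nearEdges u) := (sum_union hIN).symm
    _ ≤ #w.edges.toFinset :=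
        sum_card_le_card_of_pairwiseDisjoint (fun u _ => w.nearEdges_subset u) hdisj
    _ = w.length := hw.isTrail.card_toFinset_edges
end

section
/- Let G be a finite simple graph with maximum degree at most 3 and girth at least 6, and let v be a degree-2 vertex whose two neighbors both have degree 2. Then for any list assignment L with |L(u)| ≥ 5 for all u, if G − N[v] admits an injective L-coloring then G admits an injective L-coloring. -/
/-!
Color `N[v]` greedily in the order `w₁, w₂, v`, where `w₁, w₂` are the neighbors of `v`.
A vertex `u` added to an injectively colored set `S` must avoid the colors of the vertices it
reaches in two steps through `S`, at most `#(N(u) ∩ S) * (Δ - 1)` of them, and its neighbors in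
`S` must already carry distinct colors, since `u` becomes their common neighbor. Each `wᵢ` has a
single colored neighbor (the other one is `v`), so it must avoid at most 2 colors, plus the color
of `w₁` in the case of `w₂`; then `v` must avoid at most 4. Lists of size 5 therefore suffice.
-/

open Finset

namespace SimpleGraph

variable {V : Type*} (G : SimpleGraph V)

/-- `φ` is an injective `L`-coloring of the induced subgraph `G[S]`. -/
def IsInjectiveListColoringOn (L : V → Finset ℕ) (S : Finset V) (φ : V → ℕ) : Prop :=
  (∀ u ∈ S, φ u ∈ L u) ∧
    ∀ a ∈ S, ∀ b ∈ S, a ≠ b → (∃ w ∈ S, G.Adj a w ∧ G.Adj b w) → φ a ≠ φ b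

variable {G} {L : V → Finset ℕ} {S : Finset V} {φ : V → ℕ} {u : V} {c : ℕ}

theorem IsInjectiveListColoringOn.insert_update [DecidableEq V] [DecidableRel G.Adj]
    (hφ : G.IsInjectiveListColoringOn L S φ) (hu : u ∉ S)
    (hnbrs : Set.InjOn φ (S.filter (G.Adj u) : Set V)) (hc : c ∈ L u)
    (hfar : ∀ b ∈ S, (∃ w ∈ S, G.Adj u w ∧ G.Adj b w) → c ≠ φ b) :
    G.IsInjectiveListColoringOn L (insert u S) (Function.update φ u c) := by
  have hS : ∀ b ∈ S, Function.update φ u c b = φ b := fun b hb =>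
    Function.update_of_ne (ne_of_mem_of_not_mem hb hu) _ _
  refine ⟨fun b hb => ?_, fun a ha b hb hab ⟨w, hw, haw, hbw⟩ => ?_⟩
  · rcases mem_insert.1 hb with rfl | hb
    · simpa using hc
    · simpa [hS b hb] using hφ.1 b hb
  rcases mem_insert.1 hw with rfl | hwS
  · have haS : a ∈ S := (mem_insert.1 ha).resolve_left haw.ne
    have hbS : b ∈ S := (mem_insert.1 hb).resolve_left hbw.ne
    rw [hS a haS, hS b hbS]
    exact fun h => hab (hnbrs (by simp [haS, haw.symm]) (by simp [hbS, hbw.symm]) h)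
  rcases mem_insert.1 ha with rfl | haS <;> rcases mem_insert.1 hb with rfl | hbS
  · exact absurd rfl hab
  · simpa [hS b hbS] using hfar b hbS ⟨w, hwS, haw, hbw⟩
  · simpa [hS a haS] using (hfar a haS ⟨w, hwS, hbw, haw⟩).symm
  · rw [hS a haS, hS b hbS]
    exact hφ.2 a haS b hbS hab ⟨w, hwS, haw, hbw⟩

theorem card_image_secondNeighbors_le [Fintype V] [DecidableRel G.Adj] {Δ : ℕ}
    (hdeg : ∀ w, G.degree w ≤ Δ) (hu : u ∉ S) :
    #({b ∈ S | ∃ w ∈ S, G.Adj u w ∧ G.Adj b w}.image φ) ≤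
      #{w ∈ S | G.Adj u w} * (Δ - 1) := by
  classical
  calc _ ≤ #{b ∈ S | ∃ w ∈ S, G.Adj u w ∧ G.Adj b w} := card_image_le
    _ ≤ #({w ∈ S | G.Adj u w}.biUnion fun w => (G.neighborFinset w).erase u) := by
        refine card_le_card fun b hb => ?_
        obtain ⟨hb, w, hw, huw, hbw⟩ := mem_filter.1 hb
        simp only [mem_biUnion, mem_filter, mem_erase, mem_neighborFinset]
        exact ⟨w, ⟨hw, huw⟩, ne_of_mem_of_not_mem hb hu, hbw.symm⟩
    _ ≤ _ := card_biUnion_le_card_mul _ _ _ fun w hw => by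
        rw [card_erase_of_mem ((mem_neighborFinset _ _ _).2 (mem_filter.1 hw).2.symm),
          card_neighborFinset_eq_degree]
        exact Nat.sub_le_sub_right (hdeg w) 1

theorem IsInjectiveListColoringOn.exists_insert [Fintype V] [DecidableEq V] [DecidableRel G.Adj]
    {Δ : ℕ} (hdeg : ∀ w, G.degree w ≤ Δ) (hφ : G.IsInjectiveListColoringOn L S φ)
    (hu : u ∉ S) (hnbrs : Set.InjOn φ (S.filter (G.Adj u) : Set V)) (avoid : Finset ℕ)
    (hL : #{w ∈ S | G.Adj u w} * (Δ - 1) + #avoid < #(L u)) :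
    ∃ c ∉ avoid, G.IsInjectiveListColoringOn L (insert u S) (Function.update φ u c) := by
  set far := {b ∈ S | ∃ w ∈ S, G.Adj u w ∧ G.Adj b w}.image φ
  have hcard : #(far ∪ avoid) < #(L u) :=
    (card_union_le _ _).trans_lt
      (lt_of_le_of_lt (Nat.add_le_add_right (card_image_secondNeighbors_le hdeg hu) _) hL)
  obtain ⟨c, hc, hcfree⟩ := exists_mem_notMem_of_card_lt_card hcard
  rw [mem_union, not_or] at hcfree
  refine ⟨c, hcfree.2, hφ.insert_update hu hnbrs hc fun b hb hbu h => hcfree.1 ?_⟩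
  exact h ▸ mem_image_of_mem φ (mem_filter.2 ⟨hb, hbu⟩)

theorem card_filter_adj_le_one_of_degree_eq_two [Fintype V] [DecidableRel G.Adj] {v w : V}
    (hw : G.degree w = 2) (hvw : G.Adj v w) (hv : v ∉ S) : #{x ∈ S | G.Adj w x} ≤ 1 := by
  classical
  calc #{x ∈ S | G.Adj w x} ≤ #((G.neighborFinset w).erase v) := card_le_card fun x hx => by
        obtain ⟨hx, hwx⟩ := mem_filter.1 hx
        exact mem_erase.2 ⟨ne_of_mem_of_not_mem hx hv, (mem_neighborFinset _ _ _).2 hwx⟩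
    _ = 1 := by
        rw [card_erase_of_mem ((mem_neighborFinset _ _ _).2 hvw.symm),
          card_neighborFinset_eq_degree, hw]

theorem IsInjectiveListColoringOn.exists_insert_of_degree_eq_two [Fintype V] [DecidableEq V]
    [DecidableRel G.Adj] {Δ : ℕ} (hdeg : ∀ w, G.degree w ≤ Δ)
    (hφ : G.IsInjectiveListColoringOn L S φ) (hu : u ∉ S) {v : V} (hvu : G.Adj v u)
    (hu₂ : G.degree u = 2) (hv : v ∉ S) (avoid : Finset ℕ) (hL : Δ - 1 + #avoid < #(L u)) :
    ∃ c ∉ avoid, G.IsInjectiveListColoringOn L (insert u S) (Function.update φ u c) := by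
  have hcard := card_filter_adj_le_one_of_degree_eq_two hu₂ hvu hv
  refine hφ.exists_insert hdeg hu ?_ avoid ?_
  · exact Set.Subsingleton.injOn (fun a ha b hb => card_le_one.1 hcard a ha b hb) φ
  · calc _ ≤ 1 * (Δ - 1) + #avoid := by gcongr
      _ < #(L u) := by rwa [one_mul]

theorem IsInjectiveListColoringOn.exists_insert_of_neighbors_subset_pair [Fintype V]
    [DecidableEq V] [DecidableRel G.Adj] {Δ : ℕ} (hdeg : ∀ w, G.degree w ≤ Δ)
    (hφ : G.IsInjectiveListColoringOn L S φ) (hu : u ∉ S) {a b : V}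
    (hnbrs : ∀ x ∈ S, G.Adj u x → x = a ∨ x = b) (hab : φ a ≠ φ b)
    (hL : 2 * (Δ - 1) < #(L u)) :
    ∃ c, G.IsInjectiveListColoringOn L (insert u S) (Function.update φ u c) := by
  have hsub : {x ∈ S | G.Adj u x} ⊆ {a, b} := fun x hx => by
    simpa using hnbrs x (mem_filter.1 hx).1 (mem_filter.1 hx).2
  have hinj : Set.InjOn φ ({a, b} : Finset V) := by
    rw [coe_pair, Set.injOn_pair]
    exact fun h => absurd h hab
  have hcard : #{x ∈ S | G.Adj u x} * (Δ - 1) + #(∅ : Finset ℕ) < #(L u) := by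
    rw [card_empty, add_zero]
    exact lt_of_le_of_lt (Nat.mul_le_mul_right _ ((card_le_card hsub).trans card_le_two)) hL
  obtain ⟨c, -, hc⟩ := hφ.exists_insert hdeg hu (hinj.mono (coe_subset.2 hsub)) ∅ hcard
  exact ⟨c, hc⟩

end SimpleGraph

open Finset SimpleGraph

theorem injective_coloring_extends_closed_nbhd_general {V : Type*} [Fintype V]
    (G : SimpleGraph V) [DecidableRel G.Adj]
    (hdeg : ∀ u, G.degree u ≤ 3)
    (v : V) (hv : G.degree v = 2)
    (hnbr : ∀ w, G.Adj v w → G.degree w = 2)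
    (L : V → Finset ℕ) (hL : ∀ u, 5 ≤ (L u).card)
    (hcol : ∃ φ : V → ℕ,
      (∀ u, u ≠ v → ¬ G.Adj v u → φ u ∈ L u) ∧
      (∀ a b : V, a ≠ v → ¬ G.Adj v a → b ≠ v → ¬ G.Adj v b → a ≠ b →
        (∃ w, w ≠ v ∧ ¬ G.Adj v w ∧ G.Adj a w ∧ G.Adj b w) → φ a ≠ φ b)) :
    ∃ ψ : V → ℕ, (∀ u, ψ u ∈ L u) ∧
      ∀ a b : V, a ≠ b → (∃ w, G.Adj a w ∧ G.Adj b w) → ψ a ≠ ψ b := by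
  classical
  obtain ⟨φ, hφL, hφ⟩ := hcol
  obtain ⟨w₁, w₂, hw, hN⟩ := card_eq_two.1 (hv ▸ G.card_neighborFinset_eq_degree v)
  have hadj (u : V) : G.Adj v u ↔ u = w₁ ∨ u = w₂ := by
    rw [← mem_neighborFinset, hN, mem_insert, mem_singleton]
  have hvw₁ : G.Adj v w₁ := (hadj w₁).2 (.inl rfl)
  have hvw₂ : G.Adj v w₂ := (hadj w₂).2 (.inr rfl)
  set S₀ : Finset V := {u | u ≠ v ∧ ¬G.Adj v u}
  have hS₀ (u : V) : u ∈ S₀ ↔ u ≠ v ∧ ¬G.Adj v u := by simp [S₀]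
  have h₀ : G.IsInjectiveListColoringOn L S₀ φ := by
    refine ⟨fun u hu => ?_, fun a ha b hb hab ⟨w, hw, h⟩ => ?_⟩
    · rw [hS₀] at hu
      exact hφL u hu.1 hu.2
    rw [hS₀] at ha hb hw
    exact hφ a b ha.1 ha.2 hb.1 hb.2 hab ⟨w, hw.1, hw.2, h⟩
  obtain ⟨c₁, -, h₁⟩ := h₀.exists_insert_of_degree_eq_two hdeg (by simp [hS₀, hvw₁])
    hvw₁ (hnbr w₁ hvw₁) (by simp [hS₀]) ∅ (by rw [card_empty]; have := hL w₁; omega)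
  obtain ⟨c₂, hc₂, h₂⟩ := h₁.exists_insert_of_degree_eq_two hdeg
    (by simp [hS₀, hvw₂, hw.symm]) hvw₂ (hnbr w₂ hvw₂) (by simp [hS₀, hvw₁.ne])
    {Function.update φ w₁ c₁ w₁} (by rw [card_singleton]; have := hL w₂; omega)
  obtain ⟨c₃, h₃⟩ := h₂.exists_insert_of_neighbors_subset_pair hdeg
    (by simp [hS₀, hvw₁.ne, hvw₂.ne]) (fun x _ hx => (hadj x).1 hx)
    (by simpa [Function.update_of_ne hw, eq_comm] using hc₂) (by have := hL v; omega)
  have hmem (u : V) : u ∈ insert v (insert w₂ (insert w₁ S₀)) := by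
    have := hadj u
    simp only [mem_insert, hS₀]
    tauto
  exact ⟨_, fun u => h₃.1 u (hmem u), fun a b hab ⟨w, haw, hbw⟩ =>
    h₃.2 a (hmem a) b (hmem b) hab ⟨w, hmem w, haw, hbw⟩⟩

/-- Let `G` have maximum degree at most 3 and girth at least 6, and let `v` be
a degree-2 vertex both of whose neighbors have degree 2.  For any list
assignment with lists of size at least 5, if `G − N[v]` admits an injective
`L`-coloring then `G` admits an injective `L`-coloring. -/
theorem injective_coloring_extends_closed_nbhd {V : Type*} [Fintype V]
    (G : SimpleGraph V) [DecidableRel G.Adj]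
    (hdeg : ∀ u, G.degree u ≤ 3) (hgirth : (6 : ℕ∞) ≤ G.egirth)
    (v : V) (hv : G.degree v = 2)
    (hnbr : ∀ w, G.Adj v w → G.degree w = 2)
    (L : V → Finset ℕ) (hL : ∀ u, 5 ≤ (L u).card)
    (hcol : ∃ φ : V → ℕ,
      (∀ u, u ≠ v → ¬ G.Adj v u → φ u ∈ L u) ∧
      (∀ a b : V, a ≠ v → ¬ G.Adj v a → b ≠ v → ¬ G.Adj v b → a ≠ b →
        (∃ w, w ≠ v ∧ ¬ G.Adj v w ∧ G.Adj a w ∧ G.Adj b w) → φ a ≠ φ b)) :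
    ∃ ψ : V → ℕ, (∀ u, ψ u ∈ L u) ∧
      ∀ a b : V, a ≠ b → (∃ w, G.Adj a w ∧ G.Adj b w) → ψ a ≠ ψ b :=
  injective_coloring_extends_closed_nbhd_general G hdeg v hv hnbr L hL hcol
end
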